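/- arXiv:1310.8613 — 2 statements merged into one kernel-verified Lean document; each statement's English description precedes it below -/
import Mathlib

section
/- Let ε > 0 and let M be a matrix game with value v. If the action sequences of both players satisfy limsup_{t→∞} r(t) ≤ ε (player 1) and limsup_{t→∞} r₂(t) ≤ ε (player 2), then limsup_{t→∞} u(br, σ̂₂(t)) ≤ v + 2ε and liminf_{t→∞} u(σ̂₁(t), br) ≥ v − 2ε. -/
open Filter Finset

noncomputable section

/-- A mixed strategy: a probability vector over `Fin k`. -/
def IsMixed {k : ℕ} (σ : Fin k → ℝ) : Prop :=
  (∀ i, 0 ≤ σ i) ∧ ∑ i, σ i = 1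

/-- Expected payoff `σ₁ M σ₂` to player 1. -/
def pay {m n : ℕ} (M : Fin m → Fin n → ℝ) (σ₁ : Fin m → ℝ) (σ₂ : Fin n → ℝ) : ℝ :=
  ∑ i, ∑ j, σ₁ i * M i j * σ₂ j

/-- `u(br, σ₂) = max_{σ₁} σ₁ M σ₂`. -/
def brVal1 {m n : ℕ} (M : Fin m → Fin n → ℝ) (σ₂ : Fin n → ℝ) : ℝ :=
  sSup {x : ℝ | ∃ σ₁, IsMixed σ₁ ∧ x = pay M σ₁ σ₂}

/-- `u(σ₁, br) = min_{σ₂} σ₁ M σ₂`. -/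
def brVal2 {m n : ℕ} (M : Fin m → Fin n → ℝ) (σ₁ : Fin m → ℝ) : ℝ :=
  sInf {x : ℝ | ∃ σ₂, IsMixed σ₂ ∧ x = pay M σ₁ σ₂}

/-- `M` has value `v`: `max_{σ₁} min_{σ₂} σ₁ M σ₂ = min_{σ₂} max_{σ₁} σ₁ M σ₂ = v`. -/
def HasValue {m n : ℕ} (M : Fin m → Fin n → ℝ) (v : ℝ) : Prop :=
  sSup {x : ℝ | ∃ σ₁, IsMixed σ₁ ∧ x = brVal2 M σ₁} = v ∧
  sInf {x : ℝ | ∃ σ₂, IsMixed σ₂ ∧ x = brVal1 M σ₂} = v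

/-- `(σ₁, σ₂)` is an `ε`-equilibrium of `M`. -/
def IsEpsEquilibrium {m n : ℕ} (M : Fin m → Fin n → ℝ) (ε : ℝ)
    (σ₁ : Fin m → ℝ) (σ₂ : Fin n → ℝ) : Prop :=
  brVal1 M σ₂ - pay M σ₁ σ₂ ≤ ε ∧ pay M σ₁ σ₂ - brVal2 M σ₁ ≤ ε

/-- Empirical frequencies of the action sequence `a` over steps `1, …, t`. -/
def empFreq {k : ℕ} (a : ℕ → Fin k) (t : ℕ) : Fin k → ℝ :=
  fun x => (((Finset.Icc 1 t).filter (fun s => a s = x)).card : ℝ) / t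

/-- `g(t)`: average payoff to player 1 over steps `1, …, t`. -/
def avgPay {m n : ℕ} (M : Fin (m+1) → Fin (n+1) → ℝ)
    (iseq : ℕ → Fin (m+1)) (jseq : ℕ → Fin (n+1)) (t : ℕ) : ℝ :=
  (∑ s ∈ Finset.Icc 1 t, M (iseq s) (jseq s)) / t

/-- `g_max(t)`: maximal average payoff over player 1's pure actions. -/
def gmax {m n : ℕ} (M : Fin (m+1) → Fin (n+1) → ℝ)
    (jseq : ℕ → Fin (n+1)) (t : ℕ) : ℝ :=
  (Finset.univ.sup' Finset.univ_nonempty (fun i => ∑ s ∈ Finset.Icc 1 t, M i (jseq s))) / t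

/-- `r(t)`: average regret of player 1. -/
def regret1 {m n : ℕ} (M : Fin (m+1) → Fin (n+1) → ℝ)
    (iseq : ℕ → Fin (m+1)) (jseq : ℕ → Fin (n+1)) (t : ℕ) : ℝ :=
  gmax M jseq t - avgPay M iseq jseq t

/-- `r₂(t)`: average regret of player 2 (whose payoffs are `1 - a_{ij}`). -/
def regret2 {m n : ℕ} (M : Fin (m+1) → Fin (n+1) → ℝ)
    (iseq : ℕ → Fin (m+1)) (jseq : ℕ → Fin (n+1)) (t : ℕ) : ℝ :=
  (Finset.univ.sup' Finset.univ_nonempty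
      (fun j => ∑ s ∈ Finset.Icc 1 t, (1 - M (iseq s) j))) / t -
    (∑ s ∈ Finset.Icc 1 t, (1 - M (iseq s) (jseq s))) / t



section Aux

lemma dirac_mixed {k : ℕ} (i : Fin k) : IsMixed (fun i' => if i' = i then (1:ℝ) else 0) := by
  refine ⟨fun i' => by positivity, by simp⟩

lemma pay_dirac_left {m n : ℕ} (M : Fin m → Fin n → ℝ) (i : Fin m) (σ₂ : Fin n → ℝ) :
    pay M (fun i' => if i' = i then (1:ℝ) else 0) σ₂ = ∑ j, M i j * σ₂ j := by
  unfold pay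
  rw [Finset.sum_eq_single i]
  · simp
  · intro b _ hb; simp [hb]
  · simp

lemma pay_dirac_right {m n : ℕ} (M : Fin m → Fin n → ℝ) (σ₁ : Fin m → ℝ) (j : Fin n) :
    pay M σ₁ (fun j' => if j' = j then (1:ℝ) else 0) = ∑ i, σ₁ i * M i j := by
  unfold pay
  apply Finset.sum_congr rfl
  intro i _
  rw [Finset.sum_eq_single j] <;> simp +contextual

lemma mixed_sum_le_sup' {k : ℕ} (σ : Fin (k+1) → ℝ) (h : IsMixed σ) (f : Fin (k+1) → ℝ) :
    ∑ i, σ i * f i ≤ Finset.univ.sup' Finset.univ_nonempty f := by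
  calc ∑ i, σ i * f i ≤ ∑ i, σ i * Finset.univ.sup' Finset.univ_nonempty f := by
        apply Finset.sum_le_sum
        intro i _
        exact mul_le_mul_of_nonneg_left (Finset.le_sup' f (Finset.mem_univ i)) (h.1 i)
    _ = Finset.univ.sup' Finset.univ_nonempty f := by rw [← Finset.sum_mul, h.2, one_mul]

lemma inf'_le_mixed_sum {k : ℕ} (σ : Fin (k+1) → ℝ) (h : IsMixed σ) (f : Fin (k+1) → ℝ) :
    Finset.univ.inf' Finset.univ_nonempty f ≤ ∑ i, σ i * f i := by
  calc Finset.univ.inf' Finset.univ_nonempty f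
      = ∑ i, σ i * Finset.univ.inf' Finset.univ_nonempty f := by rw [← Finset.sum_mul, h.2, one_mul]
    _ ≤ ∑ i, σ i * f i := by
        apply Finset.sum_le_sum
        intro i _
        exact mul_le_mul_of_nonneg_left (Finset.inf'_le f (Finset.mem_univ i)) (h.1 i)

lemma pay_left_factor {m n : ℕ} (M : Fin m → Fin n → ℝ) (σ₁ : Fin m → ℝ) (σ₂ : Fin n → ℝ) :
    pay M σ₁ σ₂ = ∑ i, σ₁ i * ∑ j, M i j * σ₂ j := by
  unfold pay; apply Finset.sum_congr rfl; intro i _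
  rw [Finset.mul_sum]; apply Finset.sum_congr rfl; intro j _; ring

lemma pay_right_factor {m n : ℕ} (M : Fin m → Fin n → ℝ) (σ₁ : Fin m → ℝ) (σ₂ : Fin n → ℝ) :
    pay M σ₁ σ₂ = ∑ j, σ₂ j * ∑ i, σ₁ i * M i j := by
  unfold pay; rw [Finset.sum_comm]; apply Finset.sum_congr rfl; intro j _
  rw [Finset.mul_sum]; apply Finset.sum_congr rfl; intro i _; ring

lemma brVal1_eq_sup' {m n : ℕ} (M : Fin (m+1) → Fin (n+1) → ℝ) (σ₂ : Fin (n+1) → ℝ)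
    (h : IsMixed σ₂) :
    brVal1 M σ₂ = Finset.univ.sup' Finset.univ_nonempty (fun i => ∑ j, M i j * σ₂ j) := by
  apply le_antisymm
  · have hne : {x : ℝ | ∃ σ₁, IsMixed σ₁ ∧ x = pay M σ₁ σ₂}.Nonempty :=
      ⟨_, _, dirac_mixed 0, rfl⟩
    apply csSup_le hne
    rintro x ⟨σ₁, hσ₁, rfl⟩
    rw [pay_left_factor]
    exact mixed_sum_le_sup' σ₁ hσ₁ _
  · obtain ⟨i₀, -, hi₀⟩ := Finset.exists_mem_eq_sup' (Finset.univ_nonempty)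
      (fun i => ∑ j, M i j * σ₂ j)
    rw [hi₀]
    apply le_csSup
    · refine ⟨Finset.univ.sup' Finset.univ_nonempty (fun i => ∑ j, M i j * σ₂ j), ?_⟩
      rintro x ⟨σ₁, hσ₁, rfl⟩
      rw [pay_left_factor]; exact mixed_sum_le_sup' σ₁ hσ₁ _
    · exact ⟨_, dirac_mixed i₀, (pay_dirac_left M i₀ σ₂).symm⟩

lemma brVal2_eq_inf' {m n : ℕ} (M : Fin (m+1) → Fin (n+1) → ℝ) (σ₁ : Fin (m+1) → ℝ)
    (h : IsMixed σ₁) :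
    brVal2 M σ₁ = Finset.univ.inf' Finset.univ_nonempty (fun j => ∑ i, σ₁ i * M i j) := by
  apply le_antisymm
  · obtain ⟨j₀, -, hj₀⟩ := Finset.exists_mem_eq_inf' (Finset.univ_nonempty)
      (fun j => ∑ i, σ₁ i * M i j)
    rw [hj₀]
    apply csInf_le
    · refine ⟨Finset.univ.inf' Finset.univ_nonempty (fun j => ∑ i, σ₁ i * M i j), ?_⟩
      rintro x ⟨σ₂, hσ₂, rfl⟩
      rw [pay_right_factor]; exact inf'_le_mixed_sum σ₂ hσ₂ _
    · exact ⟨_, dirac_mixed j₀, (pay_dirac_right M σ₁ j₀).symm⟩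
  · have hne : {x : ℝ | ∃ σ₂, IsMixed σ₂ ∧ x = pay M σ₁ σ₂}.Nonempty :=
      ⟨_, _, dirac_mixed 0, rfl⟩
    apply le_csInf hne
    rintro x ⟨σ₂, hσ₂, rfl⟩
    rw [pay_right_factor]
    exact inf'_le_mixed_sum σ₂ hσ₂ _

lemma val_le_brVal1 {m n : ℕ} (M : Fin (m+1) → Fin (n+1) → ℝ)
    (hM : ∀ i j, M i j ∈ Set.Icc (0:ℝ) 1) {v : ℝ} (hv : HasValue M v)
    (σ₂ : Fin (n+1) → ℝ) (h : IsMixed σ₂) : v ≤ brVal1 M σ₂ := by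
  rw [← hv.2]
  apply csInf_le
  · refine ⟨0, ?_⟩
    rintro x ⟨σ₂', hσ₂', rfl⟩
    rw [brVal1_eq_sup' M σ₂' hσ₂']
    refine le_trans ?_ (Finset.le_sup' _ (Finset.mem_univ 0))
    exact Finset.sum_nonneg fun j _ => mul_nonneg (hM 0 j).1 (hσ₂'.1 j)
  · exact ⟨σ₂, h, rfl⟩

lemma brVal2_le_val {m n : ℕ} (M : Fin (m+1) → Fin (n+1) → ℝ)
    (hM : ∀ i j, M i j ∈ Set.Icc (0:ℝ) 1) {v : ℝ} (hv : HasValue M v)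
    (σ₁ : Fin (m+1) → ℝ) (h : IsMixed σ₁) : brVal2 M σ₁ ≤ v := by
  rw [← hv.1]
  apply le_csSup
  · refine ⟨1, ?_⟩
    rintro x ⟨σ₁', hσ₁', rfl⟩
    rw [brVal2_eq_inf' M σ₁' hσ₁']
    refine le_trans (Finset.inf'_le _ (Finset.mem_univ 0)) ?_
    calc ∑ i, σ₁' i * M i 0 ≤ ∑ i, σ₁' i * 1 :=
          Finset.sum_le_sum fun i _ => mul_le_mul_of_nonneg_left (hM i 0).2 (hσ₁'.1 i)
      _ = 1 := by simp [hσ₁'.2]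
  · exact ⟨σ₁, h, rfl⟩

lemma empFreq_mixed {k : ℕ} (a : ℕ → Fin k) {t : ℕ} (ht : 1 ≤ t) : IsMixed (empFreq a t) := by
  constructor
  · intro x; unfold empFreq; positivity
  · unfold empFreq
    rw [← Finset.sum_div]
    rw [div_eq_one_iff_eq (by exact_mod_cast Nat.one_le_iff_ne_zero.mp ht)]
    rw [← Nat.cast_sum]
    norm_cast
    rw [← Finset.card_eq_sum_card_fiberwise (fun s _ => Finset.mem_univ (a s))]
    simp

lemma sum_mul_empFreq {k : ℕ} (a : ℕ → Fin k) {t : ℕ} (ht : 1 ≤ t) (f : Fin k → ℝ) :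
    ∑ x, f x * empFreq a t x = (∑ s ∈ Finset.Icc 1 t, f (a s)) / t := by
  have h := Finset.sum_fiberwise_eq_sum_filter (Finset.Icc 1 t) Finset.univ a (fun s => f (a s))
  simp only [Finset.mem_univ, Finset.filter_true] at h
  unfold empFreq
  simp_rw [← mul_div_assoc]
  rw [← Finset.sum_div]
  congr 1
  rw [← h]
  apply Finset.sum_congr rfl
  intro x _
  rw [Finset.sum_congr rfl (fun s hs => by rw [(Finset.mem_filter.mp hs).2])]
  rw [Finset.sum_const, nsmul_eq_mul, mul_comm]

lemma brVal1_empFreq_eq {m n : ℕ} (M : Fin (m+1) → Fin (n+1) → ℝ)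
    (jseq : ℕ → Fin (n+1)) {t : ℕ} (ht : 1 ≤ t) :
    brVal1 M (empFreq jseq t) = gmax M jseq t := by
  rw [brVal1_eq_sup' M _ (empFreq_mixed jseq ht)]
  unfold gmax
  have ht' : (0:ℝ) ≤ t := Nat.cast_nonneg t
  have h1 : (fun i => ∑ j, M i j * empFreq jseq t j) =
      (fun x : ℝ => x / t) ∘ (fun i => ∑ s ∈ Finset.Icc 1 t, M i (jseq s)) :=
    funext fun i => sum_mul_empFreq jseq ht (fun j => M i j)
  rw [h1, ← Finset.comp_sup'_eq_sup'_comp Finset.univ_nonempty (fun x : ℝ => x / t)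
    (fun x y => (max_div_div_right ht' x y).symm)]

lemma brVal2_empFreq_eq {m n : ℕ} (M : Fin (m+1) → Fin (n+1) → ℝ)
    (iseq : ℕ → Fin (m+1)) {t : ℕ} (ht : 1 ≤ t) :
    brVal2 M (empFreq iseq t) =
      (Finset.univ.inf' Finset.univ_nonempty
        (fun j => ∑ s ∈ Finset.Icc 1 t, M (iseq s) j)) / t := by
  rw [brVal2_eq_inf' M _ (empFreq_mixed iseq ht)]
  have ht' : (0:ℝ) ≤ t := Nat.cast_nonneg t
  have h1 : (fun j => ∑ i, empFreq iseq t i * M i j) =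
      (fun x : ℝ => x / t) ∘ (fun j => ∑ s ∈ Finset.Icc 1 t, M (iseq s) j) := by
    funext j
    show _ = (∑ s ∈ Finset.Icc 1 t, M (iseq s) j) / (t:ℝ)
    rw [← sum_mul_empFreq iseq ht (fun i => M i j)]
    exact Finset.sum_congr rfl fun i _ => mul_comm _ _
  rw [h1, ← Finset.apply_inf'_eq_inf'_comp Finset.univ_nonempty (fun x : ℝ => x / t)
    (fun x y => (min_div_div_right ht' x y).symm)]

lemma regret2_eq {m n : ℕ} (M : Fin (m+1) → Fin (n+1) → ℝ)
    (iseq : ℕ → Fin (m+1)) (jseq : ℕ → Fin (n+1)) {t : ℕ} (ht : 1 ≤ t) :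
    regret2 M iseq jseq t = avgPay M iseq jseq t - brVal2 M (empFreq iseq t) := by
  rw [brVal2_empFreq_eq M iseq ht]
  unfold regret2 avgPay
  have hcard : ((Finset.Icc 1 t).card : ℝ) = t := by rw [Nat.card_Icc]; simp
  have hsub : ∀ g : ℕ → ℝ, ∑ s ∈ Finset.Icc 1 t, (1 - g s) =
      (t : ℝ) - ∑ s ∈ Finset.Icc 1 t, g s := by
    intro g
    rw [Finset.sum_sub_distrib, Finset.sum_const, nsmul_eq_mul, mul_one, hcard]
  have hsup : Finset.univ.sup' Finset.univ_nonempty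
      (fun j => ∑ s ∈ Finset.Icc 1 t, (1 - M (iseq s) j)) =
      (t:ℝ) - Finset.univ.inf' Finset.univ_nonempty
        (fun j => ∑ s ∈ Finset.Icc 1 t, M (iseq s) j) := by
    apply le_antisymm
    · apply Finset.sup'_le
      intro j _
      rw [hsub (fun s => M (iseq s) j)]
      exact sub_le_sub_left (Finset.inf'_le
        (fun j => ∑ s ∈ Finset.Icc 1 t, M (iseq s) j) (Finset.mem_univ j)) (t:ℝ)
    · obtain ⟨j₀, -, hj₀⟩ := Finset.exists_mem_eq_inf' (Finset.univ_nonempty)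
        (fun j => ∑ s ∈ Finset.Icc 1 t, M (iseq s) j)
      rw [hj₀, ← hsub (fun s => M (iseq s) j₀)]
      exact Finset.le_sup' (f := fun j => ∑ s ∈ Finset.Icc 1 t, (1 - M (iseq s) j))
        (Finset.mem_univ j₀)
  rw [hsup, hsub (fun s => M (iseq s) (jseq s))]
  have htpos : (0:ℝ) < t := by exact_mod_cast ht
  field_simp
  ring

end Aux

/-- If both players' average regrets satisfy `limsup r(t) ≤ ε`, then the
empirical frequencies are eventually near-optimal:
`limsup u(br, σ̂₂(t)) ≤ v + 2ε` and `liminf u(σ̂₁(t), br) ≥ v − 2ε`. -/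
theorem eps_hannan_implies_br_bounds (m n : ℕ) (M : Fin (m+1) → Fin (n+1) → ℝ)
    (hM : ∀ i j, M i j ∈ Set.Icc (0:ℝ) 1)
    (v ε : ℝ) (hε : 0 < ε) (hv : HasValue M v)
    (iseq : ℕ → Fin (m+1)) (jseq : ℕ → Fin (n+1))
    (hr1 : Filter.limsup (fun t => regret1 M iseq jseq t) Filter.atTop ≤ ε)
    (hr2 : Filter.limsup (fun t => regret2 M iseq jseq t) Filter.atTop ≤ ε) :
    Filter.limsup (fun t => brVal1 M (empFreq jseq t)) Filter.atTop ≤ v + 2 * ε ∧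
      v - 2 * ε ≤ Filter.liminf (fun t => brVal2 M (empFreq iseq t)) Filter.atTop := by
  -- boundedness of regrets
  have havg_nonneg : ∀ t, 0 ≤ avgPay M iseq jseq t := fun t =>
    div_nonneg (Finset.sum_nonneg fun s _ => (hM _ _).1) (Nat.cast_nonneg t)
  have hcard : ∀ t : ℕ, ((Finset.Icc 1 t).card : ℝ) = t := fun t => by
    rw [Nat.card_Icc]; simp
  have hr1_bdd : ∀ t, regret1 M iseq jseq t ≤ 1 := by
    intro t
    have h1 : gmax M jseq t ≤ 1 := by
      unfold gmax
      rcases Nat.eq_zero_or_pos t with h | h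
      · subst h; simp
      · have htpos : (0:ℝ) < t := by exact_mod_cast h
        rw [div_le_one htpos]
        apply Finset.sup'_le
        intro i _
        calc ∑ s ∈ Finset.Icc 1 t, M i (jseq s) ≤ ∑ s ∈ Finset.Icc 1 t, 1 :=
              Finset.sum_le_sum fun s _ => (hM _ _).2
          _ = (t:ℝ) := by rw [Finset.sum_const, nsmul_eq_mul, mul_one, hcard]
    have := havg_nonneg t
    unfold regret1
    linarith
  have hr2_bdd : ∀ t, regret2 M iseq jseq t ≤ 1 := by
    intro t
    unfold regret2
    have h2 : 0 ≤ (∑ s ∈ Finset.Icc 1 t, (1 - M (iseq s) (jseq s))) / (t:ℝ) :=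
      div_nonneg (Finset.sum_nonneg fun s _ => by linarith [(hM (iseq s) (jseq s)).2])
        (Nat.cast_nonneg t)
    have h1 : (Finset.univ.sup' Finset.univ_nonempty
        (fun j => ∑ s ∈ Finset.Icc 1 t, (1 - M (iseq s) j))) / (t:ℝ) ≤ 1 := by
      rcases Nat.eq_zero_or_pos t with h | h
      · subst h; simp
      · have htpos : (0:ℝ) < t := by exact_mod_cast h
        rw [div_le_one htpos]
        apply Finset.sup'_le
        intro j _
        calc ∑ s ∈ Finset.Icc 1 t, (1 - M (iseq s) j) ≤ ∑ s ∈ Finset.Icc 1 t, 1 :=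
              Finset.sum_le_sum fun s _ => by linarith [(hM (iseq s) j).1]
          _ = (t:ℝ) := by rw [Finset.sum_const, nsmul_eq_mul, mul_one, hcard]
    linarith
  -- key eventual facts
  have hEv : ∀ᶠ t in atTop,
      (brVal1 M (empFreq jseq t) ≤ v + (regret1 M iseq jseq t + regret2 M iseq jseq t)) ∧
      (v - (regret1 M iseq jseq t + regret2 M iseq jseq t) ≤ brVal2 M (empFreq iseq t)) ∧
      (v ≤ brVal1 M (empFreq jseq t)) ∧ (brVal2 M (empFreq iseq t) ≤ v) := by
    filter_upwards [Filter.eventually_ge_atTop 1] with t ht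
    have e1 : brVal1 M (empFreq jseq t) = regret1 M iseq jseq t + avgPay M iseq jseq t := by
      rw [brVal1_empFreq_eq M jseq ht]; unfold regret1; ring
    have e2 : brVal2 M (empFreq iseq t) = avgPay M iseq jseq t - regret2 M iseq jseq t := by
      have := regret2_eq M iseq jseq ht; linarith
    have b1 : v ≤ brVal1 M (empFreq jseq t) := val_le_brVal1 M hM hv _ (empFreq_mixed jseq ht)
    have b2 : brVal2 M (empFreq iseq t) ≤ v := brVal2_le_val M hM hv _ (empFreq_mixed iseq ht)
    refine ⟨by linarith, by linarith, b1, b2⟩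
  have hb1 : Filter.IsBoundedUnder (· ≤ ·) atTop (fun t => regret1 M iseq jseq t) :=
    Filter.isBoundedUnder_of_eventually_le (Filter.Eventually.of_forall hr1_bdd)
  have hb2 : Filter.IsBoundedUnder (· ≤ ·) atTop (fun t => regret2 M iseq jseq t) :=
    Filter.isBoundedUnder_of_eventually_le (Filter.Eventually.of_forall hr2_bdd)
  have hcob1 : Filter.IsCoboundedUnder (· ≤ ·) atTop (fun t => brVal1 M (empFreq jseq t)) :=
    Filter.isCoboundedUnder_le_of_eventually_le atTop (hEv.mono fun t h => h.2.2.1)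
  have hcob2 : Filter.IsCoboundedUnder (· ≥ ·) atTop (fun t => brVal2 M (empFreq iseq t)) :=
    Filter.isCoboundedUnder_ge_of_eventually_le atTop (hEv.mono fun t h => h.2.2.2)
  have key : ∀ δ : ℝ, 0 < δ →
      (∀ᶠ t in atTop, regret1 M iseq jseq t + regret2 M iseq jseq t < 2 * ε + δ) := by
    intro δ hδ
    have ev1 : ∀ᶠ t in atTop, regret1 M iseq jseq t < ε + δ/2 :=
      Filter.eventually_lt_of_limsup_lt (lt_of_le_of_lt hr1 (by linarith)) hb1
    have ev2 : ∀ᶠ t in atTop, regret2 M iseq jseq t < ε + δ/2 :=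
      Filter.eventually_lt_of_limsup_lt (lt_of_le_of_lt hr2 (by linarith)) hb2
    filter_upwards [ev1, ev2] with t h1 h2
    linarith
  constructor
  · apply le_of_forall_pos_le_add
    intro δ hδ
    apply Filter.limsup_le_of_le hcob1
    filter_upwards [hEv, key δ hδ] with t h hk
    linarith [h.1]
  · apply le_of_forall_pos_le_add
    intro δ hδ
    have : v - 2*ε - δ ≤ Filter.liminf (fun t => brVal2 M (empFreq iseq t)) atTop := by
      apply Filter.le_liminf_of_le hcob2
      filter_upwards [hEv, key δ hδ] with t h hk
      linarith [h.2.1]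
    linarith
end
end

section
/- Let ε > 0, c > 0, and let M be a matrix game with value v. Consider a repeated game with error cε relative to M, and suppose both players' average regrets with respect to the observed payoffs satisfy limsup_{t→∞} r(t) ≤ ε and limsup_{t→∞} r₂(t) ≤ ε. Then for every δ > 0 there exists t₀ ∈ ℕ such that for all t ≥ t₀ the empirical frequencies (σ̂₁(t), σ̂₂(t)) form a (4(c+1)ε + δ)-equilibrium of the exact game M. -/
open Filter Finset

noncomputable section

/-- `g(t)`: average observed payoff over steps `1, …, t`. -/
def avgObs {m n : ℕ} (aobs : ℕ → Fin (m+1) → Fin (n+1) → ℝ)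
    (iseq : ℕ → Fin (m+1)) (jseq : ℕ → Fin (n+1)) (t : ℕ) : ℝ :=
  (∑ s ∈ Finset.Icc 1 t, aobs s (iseq s) (jseq s)) / t

/-- `g_max(t)`: maximal average observed payoff over player 1's pure actions. -/
def gmaxObs {m n : ℕ} (aobs : ℕ → Fin (m+1) → Fin (n+1) → ℝ)
    (jseq : ℕ → Fin (n+1)) (t : ℕ) : ℝ :=
  (Finset.univ.sup' Finset.univ_nonempty
    (fun i => ∑ s ∈ Finset.Icc 1 t, aobs s i (jseq s))) / t

/-- `r(t)`: player 1's average regret with respect to the observed payoffs. -/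
def regretObs1 {m n : ℕ} (aobs : ℕ → Fin (m+1) → Fin (n+1) → ℝ)
    (iseq : ℕ → Fin (m+1)) (jseq : ℕ → Fin (n+1)) (t : ℕ) : ℝ :=
  gmaxObs aobs jseq t - avgObs aobs iseq jseq t

/-- `r₂(t)`: player 2's average regret with respect to the observed payoffs
`1 - a_{ij}(s)`. -/
def regretObs2 {m n : ℕ} (aobs : ℕ → Fin (m+1) → Fin (n+1) → ℝ)
    (iseq : ℕ → Fin (m+1)) (jseq : ℕ → Fin (n+1)) (t : ℕ) : ℝ :=
  (Finset.univ.sup' Finset.univ_nonempty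
      (fun j => ∑ s ∈ Finset.Icc 1 t, (1 - aobs s (iseq s) j))) / t -
    (∑ s ∈ Finset.Icc 1 t, (1 - aobs s (iseq s) (jseq s))) / t

/-- The observed payoffs `aobs` form a repeated game with error `η` relative to `M`,
with error threshold time `t₀`. -/
def ErrorBoundedFrom {m n : ℕ} (aobs : ℕ → Fin (m+1) → Fin (n+1) → ℝ)
    (M : Fin (m+1) → Fin (n+1) → ℝ) (η : ℝ) (t₀ : ℕ) : Prop :=
  ∀ s, t₀ ≤ s → ∀ i j, |aobs s i j - M i j| < η

lemma isMixed_pure {k : ℕ} (i0 : Fin (k+1)) :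
    IsMixed (fun i => if i = i0 then (1:ℝ) else 0) := by
  refine ⟨fun i => by positivity, ?_⟩
  simp

lemma empFreq_isMixed {k : ℕ} (a : ℕ → Fin (k+1)) {t : ℕ} (ht : 1 ≤ t) :
    IsMixed (empFreq a t) := by
  constructor
  · intro i; unfold empFreq; positivity
  · unfold empFreq
    rw [← Finset.sum_div, div_eq_one_iff_eq (by exact_mod_cast Nat.pos_of_ne_zero (by omega) |>.ne')]
    rw [← Nat.cast_sum]
    norm_cast
    rw [← Finset.card_eq_sum_card_fiberwise (fun s _ => Finset.mem_univ (a s))]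
    simp

lemma sum_empFreq {k : ℕ} (a : ℕ → Fin (k+1)) (t : ℕ) (f : Fin (k+1) → ℝ) :
    ∑ x, f x * empFreq a t x = (∑ s ∈ Finset.Icc 1 t, f (a s)) / t := by
  have h : ∑ s ∈ Finset.Icc 1 t, f (a s)
      = ∑ x, (((Finset.Icc 1 t).filter (fun s => a s = x)).card : ℝ) * f x := by
    rw [← Finset.sum_fiberwise (Finset.Icc 1 t) a (fun s => f (a s))]
    refine Finset.sum_congr rfl fun x _ => ?_
    rw [Finset.sum_congr rfl (fun s hs => by rw [(Finset.mem_filter.mp hs).2]),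
        Finset.sum_const, nsmul_eq_mul]
  rw [h, Finset.sum_div]
  refine Finset.sum_congr rfl fun x _ => ?_
  unfold empFreq
  ring

lemma mixed_dot_le_sup' {k : ℕ} (σ : Fin (k+1) → ℝ) (hσ : IsMixed σ) (f : Fin (k+1) → ℝ) :
    ∑ i, σ i * f i ≤ Finset.univ.sup' Finset.univ_nonempty f := by
  calc ∑ i, σ i * f i ≤ ∑ i, σ i * Finset.univ.sup' Finset.univ_nonempty f :=
        Finset.sum_le_sum fun i _ =>
          mul_le_mul_of_nonneg_left (Finset.le_sup' f (Finset.mem_univ i)) (hσ.1 i)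
    _ = _ := by rw [← Finset.sum_mul, hσ.2, one_mul]

lemma inf'_le_mixed_dot {k : ℕ} (σ : Fin (k+1) → ℝ) (hσ : IsMixed σ) (f : Fin (k+1) → ℝ) :
    Finset.univ.inf' Finset.univ_nonempty f ≤ ∑ i, σ i * f i := by
  calc Finset.univ.inf' Finset.univ_nonempty f
      = ∑ i, σ i * Finset.univ.inf' Finset.univ_nonempty f := by
        rw [← Finset.sum_mul, hσ.2, one_mul]
    _ ≤ ∑ i, σ i * f i :=
        Finset.sum_le_sum fun i _ =>
          mul_le_mul_of_nonneg_left (Finset.inf'_le f (Finset.mem_univ i)) (hσ.1 i)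

lemma sup'_const_sub {α : Type*} {s : Finset α} (hs : s.Nonempty) (C : ℝ) (f : α → ℝ) :
    s.sup' hs (fun a => C - f a) = C - s.inf' hs f := by
  apply le_antisymm
  · exact Finset.sup'_le _ _ fun a ha => by linarith [Finset.inf'_le f ha]
  · obtain ⟨a, ha, h⟩ := Finset.exists_mem_eq_inf' hs f
    rw [h]
    exact Finset.le_sup' (fun a => C - f a) ha

lemma sup'_div_pos {k : ℕ} (f : Fin (k+1) → ℝ) {T : ℝ} (hT : 0 < T) :
    Finset.univ.sup' Finset.univ_nonempty (fun i => f i / T)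
      = Finset.univ.sup' Finset.univ_nonempty f / T := by
  apply le_antisymm
  · exact Finset.sup'_le _ _ fun i _ => by
      gcongr; exact Finset.le_sup' f (Finset.mem_univ i)
  · obtain ⟨a, ha, h⟩ := Finset.exists_mem_eq_sup' Finset.univ_nonempty f
    rw [h]
    exact Finset.le_sup' (fun i => f i / T) ha

lemma inf'_div_pos {k : ℕ} (f : Fin (k+1) → ℝ) {T : ℝ} (hT : 0 < T) :
    Finset.univ.inf' Finset.univ_nonempty (fun i => f i / T)
      = Finset.univ.inf' Finset.univ_nonempty f / T := by
  apply le_antisymm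
  · obtain ⟨a, ha, h⟩ := Finset.exists_mem_eq_inf' Finset.univ_nonempty f
    rw [h]
    exact Finset.inf'_le (fun i => f i / T) ha
  · exact Finset.le_inf' _ _ fun i _ => by
      gcongr; exact Finset.inf'_le f (Finset.mem_univ i)

lemma sum_err_bound (t₀' t : ℕ) (B : ℝ) (hB : 0 ≤ B) (f g : ℕ → ℝ)
    (hfg : ∀ s, t₀' ≤ s → f s ≤ g s + B) (hf1 : ∀ s, f s ≤ g s + 1) :
    ∑ s ∈ Finset.Icc 1 t, f s ≤ (∑ s ∈ Finset.Icc 1 t, g s) + ((t₀' : ℝ) + t * B) := by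
  have key : ∀ s ∈ Finset.Icc 1 t, f s ≤ g s + (B + if t₀' ≤ s then 0 else 1) := by
    intro s _
    by_cases h : t₀' ≤ s
    · simpa [h] using hfg s h
    · simp only [h, if_false]; linarith [hf1 s]
  have hcard : ((Finset.Icc 1 t).card : ℝ) = t := by simp
  have hind : ∑ s ∈ Finset.Icc 1 t, (if t₀' ≤ s then (0:ℝ) else 1) ≤ t₀' := by
    calc ∑ s ∈ Finset.Icc 1 t, (if t₀' ≤ s then (0:ℝ) else 1)
        = (((Finset.Icc 1 t).filter (fun s => ¬ t₀' ≤ s)).card : ℝ) := by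
          rw [Finset.sum_ite, Finset.sum_const, Finset.sum_const]; simp
      _ ≤ ((Finset.Icc 1 t₀').card : ℝ) := by
          have : ((Finset.Icc 1 t).filter (fun s => ¬ t₀' ≤ s)) ⊆ Finset.Icc 1 t₀' := by
            intro s hs
            simp only [Finset.mem_filter, Finset.mem_Icc, not_le] at hs ⊢
            omega
          exact_mod_cast Finset.card_le_card this
      _ ≤ (t₀' : ℝ) := by simp
  calc ∑ s ∈ Finset.Icc 1 t, f s
      ≤ ∑ s ∈ Finset.Icc 1 t, (g s + (B + if t₀' ≤ s then 0 else 1)) :=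
        Finset.sum_le_sum key
    _ = (∑ s ∈ Finset.Icc 1 t, g s) + (((Finset.Icc 1 t).card : ℝ) * B
          + ∑ s ∈ Finset.Icc 1 t, (if t₀' ≤ s then (0:ℝ) else 1)) := by
        rw [Finset.sum_add_distrib, Finset.sum_add_distrib, Finset.sum_const, nsmul_eq_mul]
    _ ≤ _ := by rw [hcard]; linarith

lemma regretObs1_le_one {m n : ℕ} (aobs : ℕ → Fin (m+1) → Fin (n+1) → ℝ)
    (haobs : ∀ s i j, aobs s i j ∈ Set.Icc (0:ℝ) 1)
    (iseq : ℕ → Fin (m+1)) (jseq : ℕ → Fin (n+1)) (t : ℕ) :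
    regretObs1 aobs iseq jseq t ≤ 1 := by
  unfold regretObs1 gmaxObs avgObs
  have h1 : Finset.univ.sup' Finset.univ_nonempty
      (fun i => ∑ s ∈ Finset.Icc 1 t, aobs s i (jseq s)) ≤ (t:ℝ) := by
    apply Finset.sup'_le
    intro i _
    calc ∑ s ∈ Finset.Icc 1 t, aobs s i (jseq s)
        ≤ ∑ _s ∈ Finset.Icc 1 t, (1:ℝ) :=
          Finset.sum_le_sum fun s _ => (haobs s i (jseq s)).2
      _ = t := by simp
  have h2 : (0:ℝ) ≤ ∑ s ∈ Finset.Icc 1 t, aobs s (iseq s) (jseq s) :=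
    Finset.sum_nonneg fun s _ => (haobs _ _ _).1
  rcases Nat.eq_zero_or_pos t with rfl | ht
  · simp
  · have hT : (0:ℝ) < t := by exact_mod_cast ht
    have h3 : Finset.univ.sup' Finset.univ_nonempty
        (fun i => ∑ s ∈ Finset.Icc 1 t, aobs s i (jseq s)) / t ≤ 1 := by
      rw [div_le_one hT]; exact h1
    have h4 : 0 ≤ (∑ s ∈ Finset.Icc 1 t, aobs s (iseq s) (jseq s)) / (t:ℝ) := by positivity
    linarith

lemma regretObs2_le_one {m n : ℕ} (aobs : ℕ → Fin (m+1) → Fin (n+1) → ℝ)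
    (haobs : ∀ s i j, aobs s i j ∈ Set.Icc (0:ℝ) 1)
    (iseq : ℕ → Fin (m+1)) (jseq : ℕ → Fin (n+1)) (t : ℕ) :
    regretObs2 aobs iseq jseq t ≤ 1 := by
  unfold regretObs2
  have h1 : Finset.univ.sup' Finset.univ_nonempty
      (fun j => ∑ s ∈ Finset.Icc 1 t, (1 - aobs s (iseq s) j)) ≤ (t:ℝ) := by
    apply Finset.sup'_le
    intro j _
    calc ∑ s ∈ Finset.Icc 1 t, (1 - aobs s (iseq s) j)
        ≤ ∑ _s ∈ Finset.Icc 1 t, (1:ℝ) :=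
          Finset.sum_le_sum fun s _ => by linarith [(haobs s (iseq s) j).1]
      _ = t := by simp
  have h2 : (0:ℝ) ≤ ∑ s ∈ Finset.Icc 1 t, (1 - aobs s (iseq s) (jseq s)) :=
    Finset.sum_nonneg fun s _ => by linarith [(haobs s (iseq s) (jseq s)).2]
  rcases Nat.eq_zero_or_pos t with rfl | ht
  · simp
  · have hT : (0:ℝ) < t := by exact_mod_cast ht
    have h3 : Finset.univ.sup' Finset.univ_nonempty
        (fun j => ∑ s ∈ Finset.Icc 1 t, (1 - aobs s (iseq s) j)) / t ≤ 1 := by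
      rw [div_le_one hT]; exact h1
    have h4 : 0 ≤ (∑ s ∈ Finset.Icc 1 t, (1 - aobs s (iseq s) (jseq s))) / (t:ℝ) := by
      positivity
    linarith
/-- In a repeated game with error `cε`, if both players' average regrets with
respect to the observed payoffs satisfy `limsup r(t) ≤ ε`, then for every `δ > 0` there exists
`t₀` such that for all `t ≥ t₀` the empirical frequencies form a `(4(c+1)ε + δ)`-equilibrium
of the exact game `M`. -/
theorem error_game_empirical_equilibrium (m n : ℕ) (M : Fin (m+1) → Fin (n+1) → ℝ)
    (hM : ∀ i j, M i j ∈ Set.Icc (0:ℝ) 1)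
    (v ε c : ℝ) (hε : 0 < ε) (hc : 0 < c) (hv : HasValue M v)
    (aobs : ℕ → Fin (m+1) → Fin (n+1) → ℝ)
    (haobs : ∀ s i j, aobs s i j ∈ Set.Icc (0:ℝ) 1)
    (herr : ∃ t₀' : ℕ, ErrorBoundedFrom aobs M (c * ε) t₀')
    (iseq : ℕ → Fin (m+1)) (jseq : ℕ → Fin (n+1))
    (hr1 : Filter.limsup (fun t => regretObs1 aobs iseq jseq t) Filter.atTop ≤ ε)
    (hr2 : Filter.limsup (fun t => regretObs2 aobs iseq jseq t) Filter.atTop ≤ ε) :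
    ∀ δ > (0:ℝ), ∃ t₀ : ℕ, ∀ t ≥ t₀,
      IsEpsEquilibrium M (4 * (c + 1) * ε + δ) (empFreq iseq t) (empFreq jseq t) := by
  obtain ⟨t₀', herr⟩ := herr
  intro δ hδ
  have hbd1 : Filter.IsBoundedUnder (· ≤ ·) Filter.atTop
      (fun t => regretObs1 aobs iseq jseq t) :=
    Filter.isBoundedUnder_of ⟨1, fun t => regretObs1_le_one aobs haobs iseq jseq t⟩
  have hbd2 : Filter.IsBoundedUnder (· ≤ ·) Filter.atTop
      (fun t => regretObs2 aobs iseq jseq t) :=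
    Filter.isBoundedUnder_of ⟨1, fun t => regretObs2_le_one aobs haobs iseq jseq t⟩
  have hev1 : ∀ᶠ t in Filter.atTop, regretObs1 aobs iseq jseq t < ε + δ/8 :=
    Filter.eventually_lt_of_limsup_lt (lt_of_le_of_lt hr1 (by linarith)) hbd1
  have hev2 : ∀ᶠ t in Filter.atTop, regretObs2 aobs iseq jseq t < ε + δ/8 :=
    Filter.eventually_lt_of_limsup_lt (lt_of_le_of_lt hr2 (by linarith)) hbd2
  rw [Filter.eventually_atTop] at hev1 hev2
  obtain ⟨N1, hN1⟩ := hev1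
  obtain ⟨N2, hN2⟩ := hev2
  refine ⟨max (max N1 N2) (max 1 (Nat.ceil ((4*(t₀':ℝ))/δ))), fun t ht => ?_⟩
  have ht1 : 1 ≤ t := le_trans (le_trans (le_max_left 1 _) (le_max_right _ _)) ht
  have htN1 : N1 ≤ t := le_trans (le_trans (le_max_left N1 N2) (le_max_left _ _)) ht
  have htN2 : N2 ≤ t := le_trans (le_trans (le_max_right N1 N2) (le_max_left _ _)) ht
  have htK : ((4*(t₀':ℝ))/δ) ≤ t := by
    refine le_trans (Nat.le_ceil _) ?_
    exact_mod_cast le_trans (le_trans (le_max_right 1 _) (le_max_right _ _)) ht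
  have hT : (0:ℝ) < t := by exact_mod_cast ht1
  have hBpos : (0:ℝ) ≤ c * ε := by positivity
  set B : ℝ := (t₀' : ℝ) + (t:ℝ) * (c * ε) with hB
  -- error transfer for the max
  have hSmax : Finset.univ.sup' Finset.univ_nonempty
      (fun i => ∑ s ∈ Finset.Icc 1 t, M i (jseq s))
      ≤ Finset.univ.sup' Finset.univ_nonempty
        (fun i => ∑ s ∈ Finset.Icc 1 t, aobs s i (jseq s)) + B := by
    apply Finset.sup'_le
    intro i _
    have h := sum_err_bound t₀' t (c*ε) hBpos (fun s => M i (jseq s))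
        (fun s => aobs s i (jseq s))
        (fun s hs => by have := abs_lt.mp (herr s hs i (jseq s)); linarith [this.1])
        (fun s => by linarith [(hM i (jseq s)).2, (haobs s i (jseq s)).1])
    have h2 := Finset.le_sup' (fun i => ∑ s ∈ Finset.Icc 1 t, aobs s i (jseq s))
      (Finset.mem_univ i)
    rw [hB]; linarith
  -- error transfer for the min
  have hSmin : Finset.univ.inf' Finset.univ_nonempty
      (fun j => ∑ s ∈ Finset.Icc 1 t, aobs s (iseq s) j) - B
      ≤ Finset.univ.inf' Finset.univ_nonempty
        (fun j => ∑ s ∈ Finset.Icc 1 t, M (iseq s) j) := by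
    apply Finset.le_inf'
    intro j _
    have h := sum_err_bound t₀' t (c*ε) hBpos (fun s => aobs s (iseq s) j)
        (fun s => M (iseq s) j)
        (fun s hs => by have := abs_lt.mp (herr s hs (iseq s) j); linarith [this.2])
        (fun s => by linarith [(haobs s (iseq s) j).2, (hM (iseq s) j).1])
    have h2 := Finset.inf'_le (fun j => ∑ s ∈ Finset.Icc 1 t, aobs s (iseq s) j)
      (Finset.mem_univ j)
    rw [hB]; linarith
  -- rewrite regretObs2
  have hreg2 : regretObs2 aobs iseq jseq t =
      (∑ s ∈ Finset.Icc 1 t, aobs s (iseq s) (jseq s)) / t -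
      (Finset.univ.inf' Finset.univ_nonempty
        (fun j => ∑ s ∈ Finset.Icc 1 t, aobs s (iseq s) j)) / t := by
    unfold regretObs2
    have hc1 : (fun j => ∑ s ∈ Finset.Icc 1 t, (1 - aobs s (iseq s) j))
        = fun j => (t:ℝ) - ∑ s ∈ Finset.Icc 1 t, aobs s (iseq s) j := by
      funext j
      rw [Finset.sum_sub_distrib, Finset.sum_const, nsmul_eq_mul]
      simp
    have hc2 : ∑ s ∈ Finset.Icc 1 t, (1 - aobs s (iseq s) (jseq s))
        = (t:ℝ) - ∑ s ∈ Finset.Icc 1 t, aobs s (iseq s) (jseq s) := by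
      rw [Finset.sum_sub_distrib, Finset.sum_const, nsmul_eq_mul]; simp
    rw [hc2, hc1, sup'_const_sub, sub_div, sub_div]
    ring
  have hsum : regretObs1 aobs iseq jseq t + regretObs2 aobs iseq jseq t =
      (Finset.univ.sup' Finset.univ_nonempty
        (fun i => ∑ s ∈ Finset.Icc 1 t, aobs s i (jseq s))) / t -
      (Finset.univ.inf' Finset.univ_nonempty
        (fun j => ∑ s ∈ Finset.Icc 1 t, aobs s (iseq s) j)) / t := by
    rw [hreg2]; unfold regretObs1 gmaxObs avgObs; ring
  -- the key bound
  have hkey : (Finset.univ.sup' Finset.univ_nonempty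
        (fun i => ∑ s ∈ Finset.Icc 1 t, M i (jseq s))) / t -
      (Finset.univ.inf' Finset.univ_nonempty
        (fun j => ∑ s ∈ Finset.Icc 1 t, M (iseq s) j)) / t ≤ 4*(c+1)*ε + δ := by
    have e1 := hN1 t htN1
    have e2 := hN2 t htN2
    have d1 : (Finset.univ.sup' Finset.univ_nonempty
        (fun i => ∑ s ∈ Finset.Icc 1 t, M i (jseq s))) / t
        ≤ (Finset.univ.sup' Finset.univ_nonempty
          (fun i => ∑ s ∈ Finset.Icc 1 t, aobs s i (jseq s))) / t + B / t := by
      rw [← add_div]; gcongr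
    have d2 : (Finset.univ.inf' Finset.univ_nonempty
        (fun j => ∑ s ∈ Finset.Icc 1 t, aobs s (iseq s) j)) / t - B / t
        ≤ (Finset.univ.inf' Finset.univ_nonempty
          (fun j => ∑ s ∈ Finset.Icc 1 t, M (iseq s) j)) / t := by
      rw [← sub_div]; gcongr
    have h4 : 4*(t₀':ℝ) ≤ (t:ℝ) * δ := (div_le_iff₀ hδ).mp htK
    have hBt : B / t ≤ (c*ε) + δ/4 := by
      rw [hB, add_div]
      have h1 : (t₀':ℝ)/t ≤ δ/4 := by
        rw [div_le_div_iff₀ hT (by norm_num : (0:ℝ) < 4)]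
        linarith
      have h2 : (t:ℝ) * (c*ε) / t = c*ε := by field_simp
      linarith
    have hce : (0:ℝ) < (c+1)*ε := by positivity
    nlinarith [hsum, e1, e2, d1, d2, hBt]
  -- empirical strategies are mixed
  have hmix1 := empFreq_isMixed iseq ht1
  have hmix2 := empFreq_isMixed jseq ht1
  have pay_row : ∀ σ₁' : Fin (m+1) → ℝ, pay M σ₁' (empFreq jseq t)
      = ∑ i, σ₁' i * ((∑ s ∈ Finset.Icc 1 t, M i (jseq s)) / t) := by
    intro σ₁'
    unfold pay
    refine Finset.sum_congr rfl fun i _ => ?_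
    rw [← sum_empFreq jseq t (fun j => M i j), Finset.mul_sum]
    exact Finset.sum_congr rfl fun j _ => by ring
  have pay_col : ∀ σ₂' : Fin (n+1) → ℝ, pay M (empFreq iseq t) σ₂'
      = ∑ j, σ₂' j * ((∑ s ∈ Finset.Icc 1 t, M (iseq s) j) / t) := by
    intro σ₂'
    unfold pay
    rw [Finset.sum_comm]
    refine Finset.sum_congr rfl fun j _ => ?_
    rw [← sum_empFreq iseq t (fun i => M i j), Finset.mul_sum]
    exact Finset.sum_congr rfl fun i _ => by ring
  have hb1 : brVal1 M (empFreq jseq t) ≤ (Finset.univ.sup' Finset.univ_nonempty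
      (fun i => ∑ s ∈ Finset.Icc 1 t, M i (jseq s))) / t := by
    refine csSup_le ⟨pay M (fun i => if i = 0 then (1:ℝ) else 0) (empFreq jseq t),
      ⟨_, isMixed_pure 0, rfl⟩⟩ ?_
    rintro x ⟨σ₁', hσ₁', rfl⟩
    rw [pay_row σ₁']
    calc ∑ i, σ₁' i * ((∑ s ∈ Finset.Icc 1 t, M i (jseq s)) / t)
        ≤ Finset.univ.sup' Finset.univ_nonempty
            (fun i => (∑ s ∈ Finset.Icc 1 t, M i (jseq s)) / t) :=
          mixed_dot_le_sup' σ₁' hσ₁' _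
      _ = _ := sup'_div_pos _ hT
  have hb2 : (Finset.univ.inf' Finset.univ_nonempty
      (fun j => ∑ s ∈ Finset.Icc 1 t, M (iseq s) j)) / t ≤ brVal2 M (empFreq iseq t) := by
    refine le_csInf ⟨pay M (empFreq iseq t) (fun j => if j = 0 then (1:ℝ) else 0),
      ⟨_, isMixed_pure 0, rfl⟩⟩ ?_
    rintro x ⟨σ₂', hσ₂', rfl⟩
    rw [pay_col σ₂']
    calc (Finset.univ.inf' Finset.univ_nonempty
          (fun j => ∑ s ∈ Finset.Icc 1 t, M (iseq s) j)) / t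
        = Finset.univ.inf' Finset.univ_nonempty
            (fun j => (∑ s ∈ Finset.Icc 1 t, M (iseq s) j) / t) :=
          (inf'_div_pos _ hT).symm
      _ ≤ ∑ j, σ₂' j * ((∑ s ∈ Finset.Icc 1 t, M (iseq s) j) / t) :=
          inf'_le_mixed_dot σ₂' hσ₂' _
  have hb3 : (Finset.univ.inf' Finset.univ_nonempty
      (fun j => ∑ s ∈ Finset.Icc 1 t, M (iseq s) j)) / t
      ≤ pay M (empFreq iseq t) (empFreq jseq t) := by
    rw [pay_col]
    calc (Finset.univ.inf' Finset.univ_nonempty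
          (fun j => ∑ s ∈ Finset.Icc 1 t, M (iseq s) j)) / t
        = Finset.univ.inf' Finset.univ_nonempty
            (fun j => (∑ s ∈ Finset.Icc 1 t, M (iseq s) j) / t) :=
          (inf'_div_pos _ hT).symm
      _ ≤ _ := inf'_le_mixed_dot (empFreq jseq t) hmix2 _
  have hb4 : pay M (empFreq iseq t) (empFreq jseq t)
      ≤ (Finset.univ.sup' Finset.univ_nonempty
        (fun i => ∑ s ∈ Finset.Icc 1 t, M i (jseq s))) / t := by
    rw [pay_row]
    calc ∑ i, empFreq iseq t i * ((∑ s ∈ Finset.Icc 1 t, M i (jseq s)) / t)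
        ≤ Finset.univ.sup' Finset.univ_nonempty
            (fun i => (∑ s ∈ Finset.Icc 1 t, M i (jseq s)) / t) :=
          mixed_dot_le_sup' (empFreq iseq t) hmix1 _
      _ = _ := sup'_div_pos _ hT
  constructor
  · linarith
  · linarith
end
end
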